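/- For every real exponent p ≥ 2 there exists a constant c_p > 0 such that for all real numbers a and b one has |a|^p - |b|^p - p·(a-b)·b·|b|^{p-2} ≥ c_p·|a-b|^p (where b·|b|^{p-2} is interpreted as 0 when b = 0). -/

import Mathlib

private lemma rpow_superadd {x y q : ℝ} (hx : 0 ≤ x) (hy : 0 ≤ y) (hq : 1 ≤ q) :
    x ^ q + y ^ q ≤ (x + y) ^ q := by
  lift x to NNReal using hx
  lift y to NNReal using hy
  rw [← NNReal.coe_add, ← NNReal.coe_rpow, ← NNReal.coe_rpow, ← NNReal.coe_rpow, ← NNReal.coe_add,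
    NNReal.coe_le_coe]
  exact NNReal.add_rpow_le_rpow_add x y hq

/-- Case `x ≥ y ≥ 0` : `(y+t)^p ≥ y^p + p y^(p-1) t + t^p`. -/
private lemma lemA {p : ℝ} (hp : 2 ≤ p) {y t : ℝ} (hy : 0 ≤ y) (ht : 0 ≤ t) :
    y ^ p + p * y ^ (p - 1) * t + t ^ p ≤ (y + t) ^ p := by
  have hp0 : (0:ℝ) ≤ p := by linarith
  set f : ℝ → ℝ := fun s => (y + s) ^ p - p * y ^ (p - 1) * s - s ^ p with hf
  have hcont : Continuous f := by
    apply Continuous.sub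
    · apply Continuous.sub
      · exact continuous_iff_continuousAt.2 fun s =>
          (Real.continuousAt_rpow_const _ p (Or.inr hp0)).comp
            (continuousAt_const.add continuousAt_id)
      · exact (continuous_const.mul continuous_id)
    · exact continuous_iff_continuousAt.2 fun s =>
        Real.continuousAt_rpow_const _ p (Or.inr hp0)
  have hderiv : ∀ s : ℝ, 0 < s → HasDerivAt f
      (p * (y + s) ^ (p - 1) - p * y ^ (p - 1) - p * s ^ (p - 1)) s := by
    intro s hs
    have h1 : HasDerivAt (fun s : ℝ => (y + s) ^ p) (p * (y + s) ^ (p - 1) * 1) s := by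
      exact (Real.hasDerivAt_rpow_const (Or.inl (by positivity : (0:ℝ) < y + s).ne')).comp s
        ((hasDerivAt_id s).const_add y)
    have h2 : HasDerivAt (fun s : ℝ => p * y ^ (p - 1) * s) (p * y ^ (p - 1)) s := by
      simpa using (hasDerivAt_id s).const_mul (p * y ^ (p - 1))
    have h3 : HasDerivAt (fun s : ℝ => s ^ p) (p * s ^ (p - 1)) s :=
      Real.hasDerivAt_rpow_const (Or.inl hs.ne')
    exact ((h1.sub h2).sub h3).congr_deriv (by ring)
  have hmono : MonotoneOn f (Set.Ici 0) := by
    apply monotoneOn_of_deriv_nonneg (convex_Ici 0) hcont.continuousOn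
    · intro s hs
      rw [interior_Ici] at hs
      exact ((hderiv s hs).differentiableAt).differentiableWithinAt
    · intro s hs
      rw [interior_Ici] at hs
      rw [(hderiv s hs).deriv]
      have := rpow_superadd hy hs.le (by linarith : (1:ℝ) ≤ p - 1)
      nlinarith [this]
  have h0 : f 0 ≤ f t := hmono (by simp) (Set.mem_Ici.2 ht) ht
  have hf0 : f 0 = y ^ p := by
    simp [hf, Real.zero_rpow (by positivity : p ≠ 0)]
  rw [hf0] at h0
  simp only [hf] at h0
  linarith

/-- Case `0 ≤ x ≤ y` : monotone argument on `s ↦ (y-s)^p + p y^(p-1) s - s^p`. -/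
private lemma lemB {p : ℝ} (hp : 2 ≤ p) {x y : ℝ} (hx : 0 ≤ x) (hxy : x ≤ y) :
    y ^ p + p * y ^ (p - 1) * (x - y) + (y - x) ^ p ≤ x ^ p := by
  have hp0 : (0:ℝ) ≤ p := by linarith
  rcases eq_or_lt_of_le (hx.trans hxy) with hy0 | hy0
  · have hx0 : x = 0 := le_antisymm (hxy.trans hy0.symm.le) hx
    have hy0' : y = 0 := hy0.symm
    simp [hx0, hy0', Real.zero_rpow (by positivity : p ≠ 0)]
  set g : ℝ → ℝ := fun s => (y - s) ^ p + p * y ^ (p - 1) * s - s ^ p with hg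
  have hcont : Continuous g := by
    apply Continuous.sub
    · apply Continuous.add
      · exact continuous_iff_continuousAt.2 fun s =>
          (Real.continuousAt_rpow_const _ p (Or.inr hp0)).comp
            (continuousAt_const.sub continuousAt_id)
      · exact (continuous_const.mul continuous_id)
    · exact continuous_iff_continuousAt.2 fun s =>
        Real.continuousAt_rpow_const _ p (Or.inr hp0)
  have hderiv : ∀ s ∈ Set.Ioo (0:ℝ) y, HasDerivAt g
      (p * (y - s) ^ (p - 1) * (-1) + p * y ^ (p - 1) - p * s ^ (p - 1)) s := by
    rintro s ⟨hs0, hsy⟩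
    have h1 : HasDerivAt (fun s : ℝ => (y - s) ^ p) (p * (y - s) ^ (p - 1) * (-1)) s := by
      exact (Real.hasDerivAt_rpow_const (Or.inl (by linarith : (0:ℝ) < y - s).ne')).comp s
        ((hasDerivAt_id s).const_sub y)
    have h2 : HasDerivAt (fun s : ℝ => p * y ^ (p - 1) * s) (p * y ^ (p - 1)) s := by
      simpa using (hasDerivAt_id s).const_mul (p * y ^ (p - 1))
    have h3 : HasDerivAt (fun s : ℝ => s ^ p) (p * s ^ (p - 1)) s :=
      Real.hasDerivAt_rpow_const (Or.inl hs0.ne')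
    exact ((h1.add h2).sub h3).congr_deriv (by ring)
  have hmono : MonotoneOn g (Set.Icc 0 y) := by
    apply monotoneOn_of_deriv_nonneg (convex_Icc 0 y) hcont.continuousOn
    · intro s hs
      rw [interior_Icc] at hs
      exact ((hderiv s hs).differentiableAt).differentiableWithinAt
    · intro s hs
      rw [interior_Icc] at hs
      rw [(hderiv s hs).deriv]
      obtain ⟨hs1, hs2⟩ := hs
      have h := rpow_superadd (by linarith : (0:ℝ) ≤ y - s) hs1.le
        (by linarith : (1:ℝ) ≤ p - 1)
      rw [show y - s + s = y by ring] at h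
      nlinarith [h]
  have h0 : g 0 ≤ g (y - x) :=
    hmono (by simp [hy0.le]) (Set.mem_Icc.2 ⟨by linarith, by linarith⟩) (by linarith)
  have hg0 : g 0 = y ^ p := by
    simp [hg, Real.zero_rpow (by positivity : p ≠ 0)]
  rw [hg0] at h0
  simp only [hg] at h0
  rw [show y - (y - x) = x by ring] at h0
  linarith

private lemma key_half {p : ℝ} (hp : 2 ≤ p) {a b : ℝ} (hb : 0 ≤ b) :
    (2:ℝ) ^ (-p) * |a - b| ^ p ≤ |a| ^ p - |b| ^ p - p * (a - b) * (b * |b| ^ (p - 2)) := by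
  have hp0 : (0:ℝ) ≤ p := by linarith
  have hc1 : (2:ℝ) ^ (-p) ≤ 1 := by
    rw [show (1:ℝ) = (2:ℝ) ^ (0:ℝ) by simp]
    exact Real.rpow_le_rpow_of_exponent_le one_le_two (by linarith)
  have hcpos : (0:ℝ) < (2:ℝ) ^ (-p) := Real.rpow_pos_of_pos two_pos _
  rcases eq_or_lt_of_le hb with hb0 | hb0
  · -- b = 0
    rw [← hb0]
    simp only [abs_zero, sub_zero, zero_mul, mul_zero, Real.zero_rpow (by positivity : p ≠ 0)]
    have : |a| ^ p = 1 * |a| ^ p := by ring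
    nlinarith [Real.rpow_nonneg (abs_nonneg a) p,
      mul_le_mul_of_nonneg_right hc1 (Real.rpow_nonneg (abs_nonneg a) p)]
  · -- b > 0
    have hbb : b * |b| ^ (p - 2) = b ^ (p - 1) := by
      rw [abs_of_pos hb0, show p - 1 = 1 + (p - 2) by ring, Real.rpow_add hb0,
        Real.rpow_one]
    rw [hbb, abs_of_pos hb0]
    rcases le_or_gt 0 a with ha | ha
    · rw [abs_of_nonneg ha]
      rcases le_total b a with hab | hab
      · -- b ≤ a : use lemA with y = b, t = a - b
        have hA := lemA hp hb (by linarith : (0:ℝ) ≤ a - b)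
        rw [show b + (a - b) = a by ring] at hA
        have habs : |a - b| = a - b := abs_of_nonneg (by linarith)
        rw [habs]
        have hle : (2:ℝ) ^ (-p) * (a - b) ^ p ≤ (a - b) ^ p := by
          nlinarith [Real.rpow_nonneg (by linarith : (0:ℝ) ≤ a - b) p,
            mul_le_mul_of_nonneg_right hc1 (Real.rpow_nonneg (by linarith : (0:ℝ) ≤ a - b) p)]
        nlinarith [hA]
      · -- a ≤ b : use lemB
        have hB := lemB hp ha hab
        have habs : |a - b| = b - a := by
          rw [abs_of_nonpos (by linarith : a - b ≤ 0)]; ring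
        rw [habs]
        have hle : (2:ℝ) ^ (-p) * (b - a) ^ p ≤ (b - a) ^ p := by
          nlinarith [Real.rpow_nonneg (by linarith : (0:ℝ) ≤ b - a) p,
            mul_le_mul_of_nonneg_right hc1 (Real.rpow_nonneg (by linarith : (0:ℝ) ≤ b - a) p)]
        nlinarith [hB]
    · -- a < 0 : set u = -a
      set u : ℝ := -a with hu
      have hu0 : 0 < u := by simp [hu]; linarith
      have habs : |a| = u := abs_of_neg ha
      have habs2 : |a - b| = u + b := by rw [abs_of_neg (by linarith : a - b < 0)]; ring
      rw [habs, habs2]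
      -- RHS = u^p - b^p + p*(u+b)*b^(p-1) ≥ u^p + b^p
      have hbp : b * b ^ (p - 1) = b ^ p := by
        rw [show p = 1 + (p - 1) by ring, Real.rpow_add hb0, Real.rpow_one]
        ring_nf
      have hstep : u ^ p + b ^ p ≤ u ^ p - b ^ p - p * (a - b) * b ^ (p - 1) := by
        have h1 : p * (a - b) * b ^ (p - 1) = -(p * u * b ^ (p - 1)) - p * (b * b ^ (p - 1)) := by
          simp only [hu]; ring
        rw [h1, hbp]
        have h2 : 0 ≤ p * u * b ^ (p - 1) := by positivity
        nlinarith [Real.rpow_nonneg hb0.le p]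
      refine le_trans ?_ hstep
      -- 2^(-p) * (u+b)^p ≤ u^p + b^p
      have hmax : (u + b) ^ p ≤ (2:ℝ) ^ p * (u ^ p + b ^ p) := by
        have h1 : u + b ≤ 2 * max u b := by
          rcases le_total u b with h | h
          · rw [max_eq_right h]; linarith
          · rw [max_eq_left h]; linarith
        have h2 : (u + b) ^ p ≤ (2 * max u b) ^ p :=
          Real.rpow_le_rpow (by positivity) h1 hp0
        have h3 : (2 * max u b) ^ p = 2 ^ p * (max u b) ^ p :=
          Real.mul_rpow (by norm_num) (le_max_of_le_left hu0.le)
        have h4 : (max u b) ^ p ≤ u ^ p + b ^ p := by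
          rcases le_total u b with h | h
          · rw [max_eq_right h]
            nlinarith [Real.rpow_nonneg hu0.le p]
          · rw [max_eq_left h]
            nlinarith [Real.rpow_nonneg hb0.le p]
        calc (u + b) ^ p ≤ (2 * max u b) ^ p := h2
          _ = 2 ^ p * (max u b) ^ p := h3
          _ ≤ 2 ^ p * (u ^ p + b ^ p) := by
              exact mul_le_mul_of_nonneg_left h4 (by positivity)
      have hinv : (2:ℝ) ^ (-p) * (2:ℝ) ^ p = 1 := by
        rw [← Real.rpow_add two_pos]; simp
      calc (2:ℝ) ^ (-p) * (u + b) ^ p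
          ≤ (2:ℝ) ^ (-p) * ((2:ℝ) ^ p * (u ^ p + b ^ p)) :=
            mul_le_mul_of_nonneg_left hmax hcpos.le
        _ = ((2:ℝ) ^ (-p) * (2:ℝ) ^ p) * (u ^ p + b ^ p) := by ring
        _ = u ^ p + b ^ p := by rw [hinv]; ring

/-- For every real exponent `p ≥ 2` there exists a constant `c_p > 0` such that
for all real numbers `a`, `b` one has
`|a|^p - |b|^p - p·(a-b)·b·|b|^(p-2) ≥ c_p·|a-b|^p`. -/
theorem elementary_power_inequality (p : ℝ) (hp : 2 ≤ p) :
    ∃ c : ℝ, 0 < c ∧ ∀ a b : ℝ,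
      c * |a - b| ^ p ≤ |a| ^ p - |b| ^ p - p * (a - b) * (b * |b| ^ (p - 2)) := by
  refine ⟨(2:ℝ) ^ (-p), Real.rpow_pos_of_pos two_pos _, fun a b => ?_⟩
  rcases le_or_gt 0 b with hb | hb
  · exact key_half hp hb
  · have h := key_half hp (a := -a) (b := -b) (by linarith)
    rw [show -a - -b = -(a - b) by ring, abs_neg, abs_neg, abs_neg] at h
    calc (2:ℝ) ^ (-p) * |a - b| ^ p
        ≤ |a| ^ p - |b| ^ p - p * (-(a - b)) * (-b * |b| ^ (p - 2)) := h
      _ = |a| ^ p - |b| ^ p - p * (a - b) * (b * |b| ^ (p - 2)) := by ring
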